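/- Let G be a finite group and H ≤ G. For a G-set Y whose orbits are all isomorphic to G/H, the map Y ↦ Y^H and the map Z ↦ G/H ×_{WH} Z define mutually inverse constructions: for any free WH-set Z, the fixed point set (G/H ×_{WH} Z)^H is in WH-equivariant bijection with Z. -/

import Mathlib

/-- The equivalence relation on `G × Z` defining the twisted product `G/H ×_{WH} Z`
for a set `Z` with an action of the normalizer `N_G(H)` (on which `H` is meant to act
trivially, so this is a `WH`-action): `(gn, z) ∼ (g, n•z)` for `n ∈ N_G(H)`. -/
def twistedSetoidZ (G : Type*) [Group G] (H : Subgroup G) (Z : Type*)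
    [MulAction (Subgroup.normalizer (H : Set G)) Z] : Setoid (G × Z) where
  r p q := ∃ n : (Subgroup.normalizer (H : Set G)), p.1 = q.1 * (n : G) ∧ q.2 = n • p.2
  iseqv := by
    constructor
    · intro p; exact ⟨1, by simp, by simp⟩
    · rintro p q ⟨n, h1, h2⟩
      refine ⟨n⁻¹, by push_cast [h1]; group, by rw [h2]; simp⟩
    · rintro p q s ⟨n, h1, h2⟩ ⟨m, h3, h4⟩
      refine ⟨m * n, by push_cast [h1, h3]; group, by rw [h4, h2, mul_smul]⟩

/-- The `G`-action on the twisted product `G/H ×_{WH} Z`, by left translation on the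
first coordinate. -/
def twistedSmul {G : Type*} [Group G] {H : Subgroup G} {Z : Type*}
    [MulAction (Subgroup.normalizer (H : Set G)) Z] (g : G) :
    Quotient (twistedSetoidZ G H Z) → Quotient (twistedSetoidZ G H Z) :=
  Quotient.map (fun p => (g * p.1, p.2)) (by
    rintro p q ⟨n, h1, h2⟩
    exact ⟨n, by dsimp only; rw [h1, mul_assoc], h2⟩)

/-!
The point `[1, z]` is `H`-fixed because `H` acts trivially on `Z`, and `z ↦ [1, z]` is injective
because `(1, z) ∼ (1, z')` forces the connecting element of `N_G(H)` to be `1`.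
Conversely, if `[g, z]` is `H`-fixed then for each `h ∈ H` some `n ∈ N_G(H)` satisfies
`h g = g n` and `n • z = z`; freeness puts `n = g⁻¹ h g` in `H`, so `g⁻¹ H g ⊆ H`, which for
finite `H` means `g ∈ N_G(H)`, and then `[g, z] = [1, g • z]`.
-/

namespace TwistedProduct

variable {G : Type*} [Group G] {H : Subgroup G} {Z : Type*}
  [MulAction (Subgroup.normalizer (H : Set G)) Z]

local notation "twistedMk" => Quotient.mk (twistedSetoidZ G H Z)

theorem mk_normalizer_eq_mk_one_smul (n : Subgroup.normalizer (H : Set G)) (z : Z) :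
    twistedMk ((n : G), z) = twistedMk (1, n • z) :=
  Quotient.sound ⟨n, (one_mul _).symm, rfl⟩

theorem mk_one_injective : Function.Injective fun z : Z => twistedMk ((1 : G), z) := by
  intro z z' hzz'
  obtain ⟨n, hn, hz⟩ := Quotient.exact hzz'
  have hn_one : n = 1 := Subtype.ext (by simpa using hn.symm)
  simpa [hn_one] using hz.symm

theorem twistedSmul_mk_one_of_mem
    (htriv : ∀ n : Subgroup.normalizer (H : Set G), (n : G) ∈ H → ∀ z : Z, n • z = z)
    (z : Z) {h : G} (hh : h ∈ H) :
    twistedSmul h (twistedMk (1, z)) = twistedMk (1, z) :=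
  Quotient.sound ⟨⟨h, H.le_normalizer hh⟩, by simp, (htriv _ hh z).symm⟩

theorem conj_mem_of_twistedSmul_mk_eq
    (hfree : ∀ (n : Subgroup.normalizer (H : Set G)) (z : Z), n • z = z → (n : G) ∈ H)
    {g h : G} {z : Z} (hfix : twistedSmul h (twistedMk (g, z)) = twistedMk (g, z)) :
    g⁻¹ * h * g ∈ H := by
  obtain ⟨n, hn, hz⟩ := Quotient.exact hfix
  have hconj : g⁻¹ * h * g = n := by
    rw [mul_assoc, inv_mul_eq_iff_eq_mul]
    exact hn
  exact hconj ▸ hfree n z hz.symm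

theorem mem_normalizer_of_twistedSmul_mk_eq [Finite H]
    (hfree : ∀ (n : Subgroup.normalizer (H : Set G)) (z : Z), n • z = z → (n : G) ∈ H)
    {g : G} {z : Z} (hfix : ∀ h ∈ H, twistedSmul h (twistedMk (g, z)) = twistedMk (g, z)) :
    g ∈ Subgroup.normalizer (H : Set G) := by
  have hg_inv : g⁻¹ ∈ Subgroup.normalizer (H : Set G) :=
    Subgroup.mem_normalizer_fintype fun h hh => by
      simpa using conj_mem_of_twistedSmul_mk_eq hfree (hfix h hh)
  simpa using inv_mem hg_inv

end TwistedProduct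

open TwistedProduct in
/-- For a free `WH`-set `Z` (encoded as an `N_G(H)`-set on which `H` acts trivially
and only elements of `H` can fix a point), the constructions `Y ↦ Y^H` and
`Z ↦ G/H ×_{WH} Z` are mutually inverse: the natural map `z ↦ [1·H, z]` is a
`WH`-equivariant bijection from `Z` onto the `H`-fixed point set `(G/H ×_{WH} Z)^H`. -/
theorem fixedPoints_of_twisted_product
    (G : Type*) [Group G] [Fintype G] (H : Subgroup G) (Z : Type*)
    [MulAction (Subgroup.normalizer (H : Set G)) Z]
    (htriv : ∀ n : (Subgroup.normalizer (H : Set G)), (n : G) ∈ H → ∀ z : Z, n • z = z)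
    (hfree : ∀ (n : (Subgroup.normalizer (H : Set G))) (z : Z), n • z = z → (n : G) ∈ H) :
    ∃ f : Z → {q : Quotient (twistedSetoidZ G H Z) // ∀ h ∈ H, twistedSmul h q = q},
      (∀ z : Z, (f z : Quotient (twistedSetoidZ G H Z))
          = Quotient.mk (twistedSetoidZ G H Z) ((1 : G), z)) ∧
      Function.Bijective f ∧
      (∀ (n : (Subgroup.normalizer (H : Set G))) (z : Z), (f (n • z) : Quotient (twistedSetoidZ G H Z))
          = Quotient.mk (twistedSetoidZ G H Z) ((n : G), z)) := by
  refine ⟨fun z => ⟨_, fun h hh => twistedSmul_mk_one_of_mem htriv z hh⟩, fun z => rfl,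
    ⟨fun z z' hzz' => mk_one_injective (congrArg Subtype.val hzz'), ?_⟩,
    fun n z => (mk_normalizer_eq_mk_one_smul n z).symm⟩
  rintro ⟨q, hq⟩
  obtain ⟨⟨g, z⟩, rfl⟩ := Quotient.exists_rep q
  have hg := mem_normalizer_of_twistedSmul_mk_eq hfree hq
  exact ⟨(⟨g, hg⟩ : Subgroup.normalizer (H : Set G)) • z,
    Subtype.ext (mk_normalizer_eq_mk_one_smul ⟨g, hg⟩ z).symm⟩
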